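/- arXiv:1408.5007 — 4 statements merged into one kernel-verified Lean document; each statement's English description precedes it below -/
import Mathlib

section
/- For all integers n ≥ 3 and 1 ≤ k ≤ n−2, Σ_{l=k+1}^{n−1} p_L(n,l)·p_K(l,k) = ((n+1)/((n−1)(n−2)))·(12/((k+1)(k+2)))·((n+2)/(k+3) − 1). (This is the distribution of the splitting index at which the second coalescence among three randomly chosen tips of a standard Yule n-tree takes place.) -/
open Finset

/-- `n`-th harmonic number. -/
noncomputable def H (n : ℕ) : ℝ := ∑ k ∈ Finset.Icc 1 n, (1 : ℝ) / k

/-- Second-order harmonic number. -/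
noncomputable def Hbar (n : ℕ) : ℝ := ∑ k ∈ Finset.Icc 1 n, (1 : ℝ) / (k : ℝ) ^ 2

noncomputable def pK (n k : ℕ) : ℝ :=
  ((n : ℝ) + 1) / ((n : ℝ) - 1) * (2 / (((k : ℝ) + 1) * ((k : ℝ) + 2)))

noncomputable def pL (n k : ℕ) : ℝ :=
  ((n : ℝ) + 1) * ((n : ℝ) + 2) / (((n : ℝ) - 1) * ((n : ℝ) - 2)) *
    (6 * ((k : ℝ) - 1) / (((k : ℝ) + 1) * ((k : ℝ) + 2) * ((k : ℝ) + 3)))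

noncomputable def pM (n k : ℕ) : ℝ :=
  ((n : ℝ) + 1) * ((n : ℝ) + 2) * ((n : ℝ) + 3) /
      (((n : ℝ) - 1) * ((n : ℝ) - 2) * ((n : ℝ) - 3)) *
    (12 * ((k : ℝ) - 1) * ((k : ℝ) - 2) /
      (((k : ℝ) + 1) * ((k : ℝ) + 2) * ((k : ℝ) + 3) * ((k : ℝ) + 4)))

noncomputable def pKL (n k : ℕ) : ℝ :=
  ((n : ℝ) + 1) / (((n : ℝ) - 1) * ((n : ℝ) - 2)) *
    (12 / (((k : ℝ) + 1) * ((k : ℝ) + 2))) * (((n : ℝ) + 2) / ((k : ℝ) + 3) - 1)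

noncomputable def pLM (n k : ℕ) : ℝ :=
  ((n : ℝ) + 1) * ((n : ℝ) + 2) / (((n : ℝ) - 1) * ((n : ℝ) - 2) * ((n : ℝ) - 3)) *
    (72 * ((k : ℝ) - 1) / (((k : ℝ) + 1) * ((k : ℝ) + 2) * ((k : ℝ) + 3))) *
      (((n : ℝ) + 3) / ((k : ℝ) + 4) - 1)

noncomputable def pKLM (n k : ℕ) : ℝ :=
  ((n : ℝ) + 3) / (((n : ℝ) - 1) * ((n : ℝ) - 2) * ((n : ℝ) - 3)) *
      (72 / (((k : ℝ) + 1) * ((k : ℝ) + 2))) *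
      (((n : ℝ) + 1) * ((n : ℝ) + 2) / (((k : ℝ) + 3) * ((k : ℝ) + 4)) - 1) -
    ((n : ℝ) + 2) / (((n : ℝ) - 1) * ((n : ℝ) - 2) * ((n : ℝ) - 3)) *
      (144 / (((k : ℝ) + 1) * ((k : ℝ) + 2))) * (((n : ℝ) + 1) / ((k : ℝ) + 3) - 1)


lemma tel (a : ℕ) : ∀ m : ℕ, ∑ l ∈ Finset.Icc a (a + m), (1:ℝ)/(((l:ℝ)+2)*((l:ℝ)+3))
    = 1/((a:ℝ)+2) - 1/((a:ℝ)+(m:ℝ)+3) := by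
  intro m
  induction m with
  | zero =>
    simp only [Nat.add_zero, Finset.Icc_self, Finset.sum_singleton, Nat.cast_zero]
    have h1 : (a:ℝ)+2 ≠ 0 := by positivity
    have h2 : (a:ℝ)+3 ≠ 0 := by positivity
    field_simp
    ring
  | succ m ih =>
    rw [show a + (m+1) = (a + m) + 1 from rfl,
      Finset.sum_Icc_succ_top (by omega), ih]
    push_cast
    have h1 : (a:ℝ)+(m:ℝ)+3 ≠ 0 := by positivity
    have h2 : (a:ℝ)+(m:ℝ)+4 ≠ 0 := by positivity
    field_simp
    ring

set_option maxHeartbeats 1000000 in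
theorem yule_second_coalescence_of_three (n k : ℕ) (hn : 3 ≤ n) (hk1 : 1 ≤ k)
    (hk2 : k ≤ n - 2) :
    ∑ l ∈ Finset.Icc (k + 1) (n - 1), pL n l * pK l k = pKL n k := by
  obtain ⟨N, rfl⟩ : ∃ N, n = N + 3 := ⟨n - 3, by omega⟩
  have hkN : k ≤ N + 1 := by omega
  have hC : ∀ l ∈ Finset.Icc (k+1) (N+2), pL (N+3) l * pK l k =
      (((N:ℝ)+4) * ((N:ℝ)+5) / (((N:ℝ)+2) * ((N:ℝ)+1)) * (12 / (((k:ℝ)+1)*((k:ℝ)+2)))) *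
        (1/(((l:ℝ)+2)*((l:ℝ)+3))) := by
    intro l hl
    simp only [Finset.mem_Icc] at hl
    have hl2 : (2:ℕ) ≤ l := by omega
    have hl2' : (2:ℝ) ≤ (l:ℝ) := by exact_mod_cast hl2
    have h0 : (l:ℝ) - 1 ≠ 0 := by linarith
    have h1 : (l:ℝ) + 1 ≠ 0 := by linarith
    have h2 : (l:ℝ) + 2 ≠ 0 := by linarith
    have h3 : (l:ℝ) + 3 ≠ 0 := by linarith
    have hk1' : (k:ℝ) + 1 ≠ 0 := by positivity
    have hk2' : (k:ℝ) + 2 ≠ 0 := by positivity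
    have hN1 : (N:ℝ) + 1 ≠ 0 := by positivity
    have hN2 : (N:ℝ) + 2 ≠ 0 := by positivity
    unfold pL pK
    push_cast
    rw [show ((N:ℝ) + 3 - 1) = (N:ℝ) + 2 from by ring, show ((N:ℝ) + 3 - 2) = (N:ℝ) + 1 from by ring]
    field_simp
    ring
  rw [show N + 3 - 1 = N + 2 from rfl, Finset.sum_congr rfl hC, ← Finset.mul_sum,
    show N + 2 = (k+1) + (N + 1 - k) from by omega, tel]
  have e1 : (k:ℝ) + 1 ≠ 0 := by positivity
  have e2 : (k:ℝ) + 2 ≠ 0 := by positivity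
  have e3 : (k:ℝ) + 3 ≠ 0 := by positivity
  have e4 : (N:ℝ) + 1 ≠ 0 := by positivity
  have e5 : (N:ℝ) + 2 ≠ 0 := by positivity
  have e6 : (N:ℝ) + 5 ≠ 0 := by positivity
  have step : (((N:ℝ)+4) * ((N:ℝ)+5) / (((N:ℝ)+2) * ((N:ℝ)+1)) * (12 / (((k:ℝ)+1)*((k:ℝ)+2)))) *
      (1/((k:ℝ)+3) - 1/((N:ℝ)+5)) = pKL (N+3) k := by
    unfold pKL
    push_cast
    rw [show ((N:ℝ)+3-1) = (N:ℝ)+2 from by ring, show ((N:ℝ)+3-2) = (N:ℝ)+1 from by ring]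
    field_simp
    ring
  rw [← step]
  push_cast [Nat.cast_sub hkN]
  ring
end

section
/- For all integers n ≥ 4 and 2 ≤ k ≤ n−2, Σ_{m=k+1}^{n−1} p_M(n,m)·p_L(m,k) = ((n+1)(n+2)/((n−1)(n−2)(n−3)))·(72(k−1)/((k+1)(k+2)(k+3)))·((n+3)/(k+4) − 1). (This is the distribution of the splitting index of the second coalescence among four randomly chosen tips of a standard Yule n-tree.) -/
open Finset

/-! The factors `(m - 1)(m - 2)` of `pM n m` cancel the denominator of `pL m k`, leaving
`12 / ((m + 3)(m + 4)) = 12 (1 / (m + 3) - 1 / (m + 4))` times factors free of `m`,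
so the sum over `m` telescopes to `12 (1 / (k + 4) - 1 / (n + 3))` times those factors. -/

theorem Finset.sum_Icc_inv_add_sub_inv_add_one {a b : ℕ} (hab : a ≤ b) (c : ℝ) :
    ∑ m ∈ Icc a b, (((m : ℝ) + c)⁻¹ - ((m : ℝ) + c + 1)⁻¹) =
      ((a : ℝ) + c)⁻¹ - ((b : ℝ) + c + 1)⁻¹ := by
  have h := Finset.sum_Icc_sub hab fun i : ℕ ↦ -((i : ℝ) + c)⁻¹
  push_cast at h
  convert h using 1
  · exact sum_congr rfl fun _ _ ↦ by ring
  · ring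

theorem pM_mul_pL {m : ℕ} (hm : 3 ≤ m) (n k : ℕ) :
    pM n m * pL m k =
      12 * (((n : ℝ) + 1) * ((n : ℝ) + 2) * ((n : ℝ) + 3) /
          (((n : ℝ) - 1) * ((n : ℝ) - 2) * ((n : ℝ) - 3))) *
        (6 * ((k : ℝ) - 1) / (((k : ℝ) + 1) * ((k : ℝ) + 2) * ((k : ℝ) + 3))) *
        (((m : ℝ) + 3)⁻¹ - ((m : ℝ) + 3 + 1)⁻¹) := by
  have hm' : (3 : ℝ) ≤ m := by exact_mod_cast hm
  have hm1 : (m : ℝ) - 1 ≠ 0 := by linarith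
  have hm2 : (m : ℝ) - 2 ≠ 0 := by linarith
  rw [pM, pL]
  field_simp
  ring

theorem yule_second_coalescence_of_four_general (n k : ℕ) (hk1 : 2 ≤ k)
    (hk2 : k ≤ n - 2) :
    ∑ m ∈ Finset.Icc (k + 1) (n - 1), pM n m * pL m k = pLM n k := by
  have hn : ((n - 1 : ℕ) : ℝ) + 3 + 1 = n + 3 := by
    rw [Nat.cast_sub (by omega), Nat.cast_one]
    ring
  rw [sum_congr rfl fun m hm ↦ pM_mul_pL (by have := (mem_Icc.mp hm).1; omega) n k, ← mul_sum,
    sum_Icc_inv_add_sub_inv_add_one (by omega), hn, pLM]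
  push_cast
  field_simp
  ring

theorem yule_second_coalescence_of_four (n k : ℕ) (hn : 4 ≤ n) (hk1 : 2 ≤ k)
    (hk2 : k ≤ n - 2) :
    ∑ m ∈ Finset.Icc (k + 1) (n - 1), pM n m * pL m k = pLM n k :=
  yule_second_coalescence_of_four_general n k hk1 hk2
end

section
/- For all integers n ≥ 4 and 1 ≤ k ≤ n−3, Σ_{m=k+2}^{n−1} p_M(n,m)·p_{KL}(m,k) = ((n+3)/((n−1)(n−2)(n−3)))·(72/((k+1)(k+2)))·((n+1)(n+2)/((k+3)(k+4)) − 1) − ((n+2)/((n−1)(n−2)(n−3)))·(144/((k+1)(k+2)))·((n+1)/(k+3) − 1). (This is the distribution of the splitting index of the last coalescence among four randomly chosen tips of a standard Yule n-tree.) -/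
open Finset

private lemma base_real (x : ℝ) (hx : 1 ≤ x) :
    (x+3 + 1) * (x+3 + 2) * (x+3 + 3) /
        ((x+3 - 1) * (x+3 - 2) * (x+3 - 3)) *
      (12 * (x+2 - 1) * (x+2 - 2) /
        ((x+2 + 1) * (x+2 + 2) * (x+2 + 3) * (x+2 + 4))) *
      ((x+2 + 1) / ((x+2 - 1) * (x+2 - 2)) *
        (12 / ((x + 1) * (x + 2))) * ((x+2 + 2) / (x + 3) - 1)) =
    (x+3 + 3) / ((x+3 - 1) * (x+3 - 2) * (x+3 - 3)) *
        (72 / ((x + 1) * (x + 2))) *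
        ((x+3 + 1) * (x+3 + 2) / ((x + 3) * (x + 4)) - 1) -
      (x+3 + 2) / ((x+3 - 1) * (x+3 - 2) * (x+3 - 3)) *
        (144 / ((x + 1) * (x + 2))) * ((x+3 + 1) / (x + 3) - 1) := by
  have h0 : x ≠ 0 := by linarith
  have h1 : x + 1 ≠ 0 := by nlinarith
  have h2 : x + 2 ≠ 0 := by nlinarith
  have h3 : x + 3 ≠ 0 := by nlinarith
  have h4 : x + 4 ≠ 0 := by nlinarith
  have h5 : x + 5 ≠ 0 := by nlinarith
  have h6 : x + 6 ≠ 0 := by nlinarith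
  have e1 : x+3-1 = x+2 := by ring
  have e2 : x+3-2 = x+1 := by ring
  have e3 : x+3-3 = x := by ring
  have e4 : x+2-1 = x+1 := by ring
  have e5 : x+2-2 = x := by ring
  have e6 : x+3+1 = x+4 := by ring
  have e7 : x+3+2 = x+5 := by ring
  have e8 : x+3+3 = x+6 := by ring
  have e9 : x+2+1 = x+3 := by ring
  have e10 : x+2+2 = x+4 := by ring
  have e11 : x+2+3 = x+5 := by ring
  have e12 : x+2+4 = x+6 := by ring
  simp only [e1,e2,e3,e4,e5,e6,e7,e8,e9,e10,e11,e12]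
  field_simp
  ring

private lemma ratio_real (x g h : ℝ) (hx : 3 ≤ x) :
    (x+1+1 + 1) * (x+1+1 + 2) * (x+1+1 + 3) /
        ((x+1+1 - 1) * (x+1+1 - 2) * (x+1+1 - 3)) * g * h =
      (x+1 + 4) * (x+1 - 3) / ((x+1) * (x+1 + 1)) *
        ((x+1 + 1) * (x+1 + 2) * (x+1 + 3) /
            ((x+1 - 1) * (x+1 - 2) * (x+1 - 3)) * g * h) := by
  have e0 : x+1+1 = x+2 := by ring
  have e1 : x+1+2 = x+3 := by ring
  have e2 : x+1+3 = x+4 := by ring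
  have e3 : x+1+4 = x+5 := by ring
  have e4 : x+1-1 = x := by ring
  have e5 : x+1-2 = x-1 := by ring
  have e6 : x+1-3 = x-2 := by ring
  have e7 : x+2+1 = x+3 := by ring
  have e8 : x+2+2 = x+4 := by ring
  have e9 : x+2+3 = x+5 := by ring
  have e10 : x+2-1 = x+1 := by ring
  have e11 : x+2-2 = x := by ring
  have e12 : x+2-3 = x-1 := by ring
  simp only [e0,e1,e2,e3,e4,e5,e6,e7,e8,e9,e10,e11,e12]
  have h0 : x ≠ 0 := by linarith
  have hm1 : x - 1 ≠ 0 := by nlinarith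
  have hm2 : x - 2 ≠ 0 := by nlinarith
  have h1 : x + 1 ≠ 0 := by nlinarith
  have h2 : x + 2 ≠ 0 := by nlinarith
  have h3 : x + 3 ≠ 0 := by nlinarith
  have h4 : x + 4 ≠ 0 := by nlinarith
  have h5 : x + 5 ≠ 0 := by nlinarith
  field_simp

set_option maxHeartbeats 1000000 in
private lemma step_real (x y : ℝ) (hy : 1 ≤ y) (hx : y + 2 ≤ x) :
    (x+1 + 4) * (x+1 - 3) / ((x+1) * (x+1 + 1)) *
      ((x+1 + 3) / ((x+1 - 1) * (x+1 - 2) * (x+1 - 3)) *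
          (72 / ((y + 1) * (y + 2))) *
          ((x+1 + 1) * (x+1 + 2) / ((y + 3) * (y + 4)) - 1) -
        (x+1 + 2) / ((x+1 - 1) * (x+1 - 2) * (x+1 - 3)) *
          (144 / ((y + 1) * (y + 2))) * ((x+1 + 1) / (y + 3) - 1)) +
    (x+1+1 + 1) * (x+1+1 + 2) * (x+1+1 + 3) /
        ((x+1+1 - 1) * (x+1+1 - 2) * (x+1+1 - 3)) *
      (12 * (x+1 - 1) * (x+1 - 2) /
        ((x+1 + 1) * (x+1 + 2) * (x+1 + 3) * (x+1 + 4))) *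
      ((x+1 + 1) / ((x+1 - 1) * (x+1 - 2)) *
        (12 / ((y + 1) * (y + 2))) * ((x+1 + 2) / (y + 3) - 1)) =
    (x+1+1 + 3) / ((x+1+1 - 1) * (x+1+1 - 2) * (x+1+1 - 3)) *
        (72 / ((y + 1) * (y + 2))) *
        ((x+1+1 + 1) * (x+1+1 + 2) / ((y + 3) * (y + 4)) - 1) -
      (x+1+1 + 2) / ((x+1+1 - 1) * (x+1+1 - 2) * (x+1+1 - 3)) *
        (144 / ((y + 1) * (y + 2))) * ((x+1+1 + 1) / (y + 3) - 1) := by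
  have hx3 : 3 ≤ x := by linarith
  have e0 : x+1+1 = x+2 := by ring
  have e1 : x+1+2 = x+3 := by ring
  have e2 : x+1+3 = x+4 := by ring
  have e3 : x+1+4 = x+5 := by ring
  have e4 : x+1-1 = x := by ring
  have e5 : x+1-2 = x-1 := by ring
  have e6 : x+1-3 = x-2 := by ring
  have e7 : x+2+1 = x+3 := by ring
  have e8 : x+2+2 = x+4 := by ring
  have e9 : x+2+3 = x+5 := by ring
  have e10 : x+2-1 = x+1 := by ring
  have e11 : x+2-2 = x := by ring
  have e12 : x+2-3 = x-1 := by ring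
  simp only [e0,e1,e2,e3,e4,e5,e6,e7,e8,e9,e10,e11,e12]
  have h0 : x ≠ 0 := by linarith
  have hm1 : x - 1 ≠ 0 := by nlinarith
  have hm2 : x - 2 ≠ 0 := by nlinarith
  have h1 : x + 1 ≠ 0 := by nlinarith
  have h2 : x + 2 ≠ 0 := by nlinarith
  have h3 : x + 3 ≠ 0 := by nlinarith
  have h4 : x + 4 ≠ 0 := by nlinarith
  have h5 : x + 5 ≠ 0 := by nlinarith
  have hy1 : y + 1 ≠ 0 := by nlinarith
  have hy2 : y + 2 ≠ 0 := by nlinarith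
  have hy3 : y + 3 ≠ 0 := by nlinarith
  have hy4 : y + 4 ≠ 0 := by nlinarith
  field_simp
  ring

theorem yule_last_coalescence_of_four (n k : ℕ) (hn : 4 ≤ n) (hk1 : 1 ≤ k)
    (hk2 : k ≤ n - 3) :
    ∑ m ∈ Finset.Icc (k + 2) (n - 1), pM n m * pKL m k = pKLM n k := by
  have hk1' : (1:ℝ) ≤ (k:ℝ) := by exact_mod_cast hk1
  have key : ∀ N : ℕ, k + 3 ≤ N →
      ∑ m ∈ Finset.Icc (k + 2) (N - 1), pM N m * pKL m k = pKLM N k := by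
    intro N hN
    induction N, hN using Nat.le_induction with
    | base =>
      rw [show k + 3 - 1 = k + 2 from rfl, Finset.Icc_self, Finset.sum_singleton]
      unfold pM pKL pKLM
      push_cast
      exact base_real (k : ℝ) hk1'
    | succ N hN ih =>
      obtain ⟨p, rfl⟩ : ∃ p, N = p + 1 := ⟨N - 1, by omega⟩
      have hp : k + 2 ≤ p := by omega
      have hpR : (k : ℝ) + 2 ≤ (p : ℝ) := by exact_mod_cast hp
      have hx3 : (3 : ℝ) ≤ (p : ℝ) := by linarith
      rw [show (p + 1 + 1 : ℕ) - 1 = p + 1 from rfl,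
        Finset.sum_Icc_succ_top (by omega : k + 2 ≤ p + 1)]
      have hmul : ∀ m ∈ Finset.Icc (k + 2) p,
          pM (p + 1 + 1) m * pKL m k =
            ((p : ℝ) + 1 + 4) * ((p : ℝ) + 1 - 3) / (((p : ℝ) + 1) * ((p : ℝ) + 1 + 1)) *
              (pM (p + 1) m * pKL m k) := by
        intro m hm
        unfold pM
        push_cast
        exact ratio_real (p : ℝ) _ _ hx3
      rw [Nat.add_sub_cancel] at ih
      rw [Finset.sum_congr rfl hmul, ← Finset.mul_sum, ih]
      unfold pM pKL pKLM
      push_cast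
      exact step_real (p : ℝ) (k : ℝ) hk1' hpR
  exact key n (by omega)
end

section
/- For every integer n ≥ 2, Σ_{k=1}^{n−1} p_K(n,k)·H_k = 2(n − H_n)/(n−1), i.e. ((n+1)/(n−1))·Σ_{k=1}^{n−1} 2H_k/((k+1)(k+2)) = 2(n − H_n)/(n−1). -/
open Finset

lemma H_succ (m : ℕ) : H (m + 1) = H m + 1 / ((m : ℝ) + 1) := by
  unfold H
  rw [Finset.sum_Icc_succ_top (by omega)]
  push_cast
  ring

lemma aux_sum (m : ℕ) :
    ∑ k ∈ Finset.Icc 1 m, 2 * H k / (((k : ℝ) + 1) * ((k : ℝ) + 2)) =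
      2 * (((m : ℝ) + 1) - H (m + 1)) / ((m : ℝ) + 2) := by
  induction m with
  | zero => simp [H]
  | succ m ih =>
    rw [Finset.sum_Icc_succ_top (by omega), ih, H_succ (m + 1)]
    have h2 : ((m : ℝ) + 2) ≠ 0 := by positivity
    have h3 : ((m : ℝ) + 3) ≠ 0 := by positivity
    push_cast
    field_simp
    ring

theorem expectation_H_K (n : ℕ) (hn : 2 ≤ n) :
    ∑ k ∈ Finset.Icc 1 (n - 1), pK n k * H k = 2 * ((n : ℝ) - H n) / ((n : ℝ) - 1) := by
  have hcast : ((n - 1 : ℕ) : ℝ) = (n : ℝ) - 1 := by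
    have := Nat.cast_sub (by omega : 1 ≤ n) (R := ℝ); simpa using this
  have hsucc : n - 1 + 1 = n := by omega
  have hsum := aux_sum (n - 1)
  rw [hcast, hsucc] at hsum
  have h1 : ((n : ℝ) - 1) ≠ 0 := by
    have : (2 : ℝ) ≤ (n : ℝ) := by exact_mod_cast hn
    linarith
  have hn1 : ((n : ℝ) + 1) ≠ 0 := by positivity
  calc ∑ k ∈ Finset.Icc 1 (n - 1), pK n k * H k
      = ((n : ℝ) + 1) / ((n : ℝ) - 1) *
        ∑ k ∈ Finset.Icc 1 (n - 1), 2 * H k / (((k : ℝ) + 1) * ((k : ℝ) + 2)) := by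
        rw [Finset.mul_sum]
        refine Finset.sum_congr rfl fun k _ => ?_
        unfold pK; ring
    _ = ((n : ℝ) + 1) / ((n : ℝ) - 1) * (2 * (((n : ℝ) - 1 + 1) - H n) / ((n : ℝ) - 1 + 2)) := by
        rw [hsum]
    _ = 2 * ((n : ℝ) - H n) / ((n : ℝ) - 1) := by
        have e1 : (n : ℝ) - 1 + 1 = (n : ℝ) := by ring
        have e2 : (n : ℝ) - 1 + 2 = (n : ℝ) + 1 := by ring
        rw [e1, e2, div_mul_div_comm, mul_comm (((n : ℝ)) - 1) (((n : ℝ)) + 1),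
          mul_div_mul_left _ _ hn1]
end
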